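/- arXiv:2605.20039 — 2 statements merged into one kernel-verified Lean document; each statement's English description precedes it below -/
import Mathlib

section
/- Let g be the 8-dimensional Lie algebra of vector fields on ℝ³ spanned by e₁ = ∂_x, e₂ = y∂_x + x² e^y ∂_z, e₃ = x∂_z, e₄ = ∂_z, e₅ = y∂_z, e₆ = x e^y ∂_z, e₇ = e^y ∂_z, e₈ = y e^y ∂_z, and let K ⊆ g be the abelian ideal of elements supported by ∂_z (span of e₃,…,e₈). Then the extension of g/K by K does not split: there is no Lie subalgebra A ⊆ g with g = A ⊕ K as vector spaces, i.e. no complementary Lie subalgebra to K exists in g. -/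
open scoped Classical
noncomputable section

/-- Vector fields on ℝ^n, viewed as C^∞ maps ℝ^n → ℝ^n. -/
abbrev VF (n : ℕ) := (Fin n → ℝ) → (Fin n → ℝ)

/-- The Lie bracket of vector fields: [v,w](p) = Dw(p)·v(p) − Dv(p)·w(p). -/
def vbr {n : ℕ} (v w : VF n) : VF n :=
  fun p => fderiv ℝ w p (v p) - fderiv ℝ v p (w p)

/-- The i-th coordinate vector field ∂_{x_i}. -/
def dd {n : ℕ} (i : Fin n) : VF n := fun _ => Pi.single i 1

/-- A set of vector fields is abelian if all brackets of its members vanish. -/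
def IsAbelianSet {n : ℕ} (S : Set (VF n)) : Prop := ∀ v ∈ S, ∀ w ∈ S, vbr v w = 0

/-- The lower central series of a (sub)algebra of vector fields. -/
def lcs {n : ℕ} (g : Submodule ℝ (VF n)) : ℕ → Submodule ℝ (VF n)
  | 0 => g
  | j + 1 => Submodule.span ℝ {u | ∃ v ∈ g, ∃ w ∈ lcs g j, u = vbr v w}

/-- Nilpotency: the lower central series terminates. -/
def IsNilpotentVF {n : ℕ} (g : Submodule ℝ (VF n)) : Prop := ∃ j, lcs g j = ⊥

/-- The center of a Lie algebra of vector fields. -/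
def centerSet {n : ℕ} (g : Submodule ℝ (VF n)) : Set (VF n) :=
  {v | v ∈ g ∧ ∀ w ∈ g, vbr v w = 0}

/-- The dimension of the span of the evaluations at `p` of the members of `S`. -/
def evalDim {n : ℕ} (S : Set (VF n)) (p : Fin n → ℝ) : ℕ :=
  Module.finrank ℝ ↥(Submodule.span ℝ ((fun v => v p) '' S))

/-- `S` has rank `r` on `U`: `r` is the maximum over `U` of the dimension of the span of
the evaluations of the members of `S`. -/
def HasRankOn {n : ℕ} (S : Set (VF n)) (U : Set (Fin n → ℝ)) (r : ℕ) : Prop :=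
  (∀ p ∈ U, evalDim S p ≤ r) ∧ ∃ p ∈ U, evalDim S p = r

/-- Iterated adjoint action ad(v)^j. -/
def adPow {n : ℕ} (v : VF n) : ℕ → VF n → VF n
  | 0, w => w
  | j + 1, w => vbr v (adPow v j w)

/-- φ is a C^∞ diffeomorphism from U onto V (a local change of coordinates). -/
def IsDiffeoOn {n : ℕ} (φ : (Fin n → ℝ) → (Fin n → ℝ)) (U V : Set (Fin n → ℝ)) : Prop :=
  IsOpen U ∧ IsOpen V ∧ ContDiffOn ℝ (⊤ : ℕ∞) φ U ∧ Set.BijOn φ U V ∧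
    ∃ ψ, ContDiffOn ℝ (⊤ : ℕ∞) ψ V ∧ ∀ p ∈ U, ψ (φ p) = p

/-- The differential of φ transports the vector field v to the vector field w. -/
def Transports {n : ℕ} (φ : (Fin n → ℝ) → (Fin n → ℝ)) (U : Set (Fin n → ℝ))
    (v w : VF n) : Prop :=
  ∀ p ∈ U, fderiv ℝ φ p (v p) = w (φ p)

/-- A real polynomial function of one variable. -/
def IsPolyFun (f : ℝ → ℝ) : Prop := ∃ P : Polynomial ℝ, ∀ t, f t = Polynomial.eval t P

/-- A real polynomial function of two variables. -/
def IsPoly2 (f : ℝ → ℝ → ℝ) : Prop :=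
  ∃ P : MvPolynomial (Fin 2) ℝ, ∀ a b, f a b = MvPolynomial.eval ![a, b] P

/-- Polynomial in the first variable, with C^∞ coefficients in the second variable. -/
def IsPolyInX (f : ℝ → ℝ → ℝ) : Prop :=
  ∃ N : ℕ, ∃ c : Fin (N + 1) → ℝ → ℝ, (∀ i, ContDiff ℝ (⊤ : ℕ∞) (c i)) ∧
    ∀ a b, f a b = ∑ i : Fin (N + 1), c i b * a ^ (i : ℕ)

/-- `f` genuinely depends on its first variable (has positive degree in x). -/
def DependsOnX (f : ℝ → ℝ → ℝ) : Prop := ∃ a a' b, f a b ≠ f a' b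

/-- `f` genuinely depends on its second variable (has positive degree in y). -/
def DependsOnY (f : ℝ → ℝ → ℝ) : Prop := ∃ a b b', f a b ≠ f a b'

/-- The projection Π onto the (∂_x, ∂_y)-components of a vector field on ℝ³. -/
def Pzl : VF 3 →ₗ[ℝ] VF 3 where
  toFun v := fun p i => if i = 2 then 0 else v p i
  map_add' v w := by funext p i; by_cases h : i = 2 <;> simp [h]
  map_smul' c v := by funext p i; by_cases h : i = 2 <;> simp [h]

/-- The Lie algebra of vector fields generated by a set `S`. -/
def liealgGen {n : ℕ} (S : Set (VF n)) : Submodule ℝ (VF n) :=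
  sInf {h : Submodule ℝ (VF n) | S ⊆ ↑h ∧ ∀ v ∈ h, ∀ w ∈ h, vbr v w ∈ h}

/-- The eight vector fields e₁ = ∂_x, e₂ = y∂_x + x²e^y∂_z, e₃ = x∂_z, e₄ = ∂_z,
e₅ = y∂_z, e₆ = xe^y∂_z, e₇ = e^y∂_z, e₈ = ye^y∂_z. -/
def EE : Fin 8 → VF 3 :=
  ![dd 0,
    fun p => ![p 1, (0 : ℝ), (p 0) ^ 2 * Real.exp (p 1)],
    fun p => ![(0 : ℝ), (0 : ℝ), p 0],
    dd 2,
    fun p => ![(0 : ℝ), (0 : ℝ), p 1],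
    fun p => ![(0 : ℝ), (0 : ℝ), p 0 * Real.exp (p 1)],
    fun p => ![(0 : ℝ), (0 : ℝ), Real.exp (p 1)],
    fun p => ![(0 : ℝ), (0 : ℝ), p 1 * Real.exp (p 1)]]


namespace S17

open ContinuousLinearMap

/-! ### Scalar calculus helpers -/

lemma fd_proj (i : Fin 3) (p u : Fin 3 → ℝ) :
    fderiv ℝ (fun q : Fin 3 → ℝ => q i) p u = u i := by
  rw [(hasFDerivAt_apply (𝕜 := ℝ) i p).fderiv]; rfl

lemma fd_const (c : ℝ) (p u : Fin 3 → ℝ) : fderiv ℝ (fun _ : Fin 3 → ℝ => c) p u = 0 := by simp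

lemma fd_e (p u : Fin 3 → ℝ) :
    fderiv ℝ (fun q : Fin 3 → ℝ => Real.exp (q 1)) p u = Real.exp (p 1) * u 1 := by
  rw [((hasFDerivAt_apply (𝕜 := ℝ) 1 p).exp).fderiv]
  simp only [ContinuousLinearMap.coe_smul', Pi.smul_apply, proj_apply, smul_eq_mul]

lemma fd_xe (p u : Fin 3 → ℝ) :
    fderiv ℝ (fun q : Fin 3 → ℝ => q 0 * Real.exp (q 1)) p u
      = Real.exp (p 1) * u 0 + p 0 * Real.exp (p 1) * u 1 := by
  have h := ((hasFDerivAt_apply (𝕜 := ℝ) 0 p).mul ((hasFDerivAt_apply (𝕜 := ℝ) 1 p).exp))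
  rw [HasFDerivAt.fderiv (f := fun q : Fin 3 → ℝ => q 0 * Real.exp (q 1)) h]
  simp only [ContinuousLinearMap.add_apply, ContinuousLinearMap.coe_smul', Pi.smul_apply,
    proj_apply, smul_eq_mul]
  ring

lemma fd_ye (p u : Fin 3 → ℝ) :
    fderiv ℝ (fun q : Fin 3 → ℝ => q 1 * Real.exp (q 1)) p u
      = Real.exp (p 1) * u 1 + p 1 * Real.exp (p 1) * u 1 := by
  have h := ((hasFDerivAt_apply (𝕜 := ℝ) 1 p).mul ((hasFDerivAt_apply (𝕜 := ℝ) 1 p).exp))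
  rw [HasFDerivAt.fderiv (f := fun q : Fin 3 → ℝ => q 1 * Real.exp (q 1)) h]
  simp only [ContinuousLinearMap.add_apply, ContinuousLinearMap.coe_smul', Pi.smul_apply,
    proj_apply, smul_eq_mul]
  ring

lemma fd_x2e (p u : Fin 3 → ℝ) :
    fderiv ℝ (fun q : Fin 3 → ℝ => q 0 ^ 2 * Real.exp (q 1)) p u
      = 2 * p 0 * Real.exp (p 1) * u 0 + p 0 ^ 2 * Real.exp (p 1) * u 1 := by
  rw [show (fun q : Fin 3 → ℝ => q 0 ^ 2 * Real.exp (q 1))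
      = fun q : Fin 3 → ℝ => q 0 * (q 0 * Real.exp (q 1)) from funext fun q => by ring]
  have h := ((hasFDerivAt_apply (𝕜 := ℝ) 0 p).mul
    ((hasFDerivAt_apply (𝕜 := ℝ) 0 p).mul ((hasFDerivAt_apply (𝕜 := ℝ) 1 p).exp)))
  rw [HasFDerivAt.fderiv (f := fun q : Fin 3 → ℝ => q 0 * (q 0 * Real.exp (q 1))) h]
  simp only [ContinuousLinearMap.add_apply, ContinuousLinearMap.coe_smul', Pi.smul_apply,
    proj_apply, smul_eq_mul, Pi.mul_apply]
  ring

lemma d_proj (i : Fin 3) : Differentiable ℝ (fun q : Fin 3 → ℝ => q i) :=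
  fun p => (hasFDerivAt_apply (𝕜 := ℝ) i p).differentiableAt

lemma d_e : Differentiable ℝ (fun q : Fin 3 → ℝ => Real.exp (q 1)) :=
  fun p => ((hasFDerivAt_apply (𝕜 := ℝ) 1 p).exp).differentiableAt

lemma d_xe : Differentiable ℝ (fun q : Fin 3 → ℝ => q 0 * Real.exp (q 1)) :=
  fun p => (((hasFDerivAt_apply (𝕜 := ℝ) 0 p).mul
    ((hasFDerivAt_apply (𝕜 := ℝ) 1 p).exp))).differentiableAt

lemma d_ye : Differentiable ℝ (fun q : Fin 3 → ℝ => q 1 * Real.exp (q 1)) :=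
  fun p => (((hasFDerivAt_apply (𝕜 := ℝ) 1 p).mul
    ((hasFDerivAt_apply (𝕜 := ℝ) 1 p).exp))).differentiableAt

lemma d_x2e : Differentiable ℝ (fun q : Fin 3 → ℝ => q 0 ^ 2 * Real.exp (q 1)) := by
  rw [show (fun q : Fin 3 → ℝ => q 0 ^ 2 * Real.exp (q 1))
      = fun q : Fin 3 → ℝ => q 0 * (q 0 * Real.exp (q 1)) from funext fun q => by ring]
  exact fun p => (((hasFDerivAt_apply (𝕜 := ℝ) 0 p).mul
    ((hasFDerivAt_apply (𝕜 := ℝ) 0 p).mul ((hasFDerivAt_apply (𝕜 := ℝ) 1 p).exp)))).differentiableAt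

/-- Componentwise application of `fderiv` for vector fields. -/
lemma fderiv_app (v : VF 3) (p u : Fin 3 → ℝ)
    (h : ∀ i, DifferentiableAt ℝ (fun q => v q i) p) (i : Fin 3) :
    fderiv ℝ v p u i = fderiv ℝ (fun q => v q i) p u := by
  have h2 : fderiv ℝ v p = ContinuousLinearMap.pi fun i => fderiv ℝ (fun q => v q i) p :=
    fderiv_pi h
  rw [h2]; rfl


open ContinuousLinearMap

/-! ### The subspace of fields supported by ∂_z whose z-component depends only on x,y -/

def Kform : Submodule ℝ (VF 3) where
  carrier := {v | Differentiable ℝ v ∧ (∀ p, v p 0 = 0 ∧ v p 1 = 0) ∧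
      ∀ p u, u 0 = 0 → u 1 = 0 → fderiv ℝ v p u = 0}
  add_mem' := by
    rintro v w ⟨hv1, hv2, hv3⟩ ⟨hw1, hw2, hw3⟩
    refine ⟨hv1.add hw1, fun p => ⟨?_, ?_⟩, fun p u h0 h1 => ?_⟩
    · simp [(hv2 p).1, (hw2 p).1]
    · simp [(hv2 p).2, (hw2 p).2]
    · have h : fderiv ℝ (v + w) p = fderiv ℝ v p + fderiv ℝ w p :=
        fderiv_add (hv1 p) (hw1 p)
      rw [h]
      simp [hv3 p u h0 h1, hw3 p u h0 h1]
  zero_mem' := by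
    refine ⟨fun p => differentiableAt_const _, fun p => ⟨rfl, rfl⟩, fun p u h0 h1 => ?_⟩
    have h : fderiv ℝ (0 : VF 3) p = 0 := fderiv_const_apply _
    rw [h]; rfl
  smul_mem' := by
    rintro c v ⟨hv1, hv2, hv3⟩
    refine ⟨hv1.const_smul c, fun p => ⟨?_, ?_⟩, fun p u h0 h1 => ?_⟩
    · simp [(hv2 p).1]
    · simp [(hv2 p).2]
    · have h : fderiv ℝ (c • v) p = c • fderiv ℝ v p := fderiv_const_smul (hv1 p) c
      rw [h]
      simp [hv3 p u h0 h1]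

lemma mem_Kform {v : VF 3} : v ∈ Kform ↔ (Differentiable ℝ v ∧ (∀ p, v p 0 = 0 ∧ v p 1 = 0) ∧
    ∀ p u, u 0 = 0 → u 1 = 0 → fderiv ℝ v p u = 0) := Iff.rfl

lemma Kform_diff {v : VF 3} (h : v ∈ Kform) : Differentiable ℝ v := (mem_Kform.1 h).1

lemma mem_Kform_of (g : (Fin 3 → ℝ) → ℝ) (hg : Differentiable ℝ g)
    (h0 : ∀ p u, u 0 = 0 → u 1 = 0 → fderiv ℝ g p u = 0) :
    (fun q => ![(0:ℝ), 0, g q]) ∈ Kform := by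
  have hcomp : ∀ (p : Fin 3 → ℝ) (j : Fin 3),
      DifferentiableAt ℝ (fun q : Fin 3 → ℝ => (![(0:ℝ), 0, g q] : Fin 3 → ℝ) j) p := by
    intro p j
    fin_cases j
    · exact differentiableAt_const 0
    · exact differentiableAt_const 0
    · exact hg p
  refine mem_Kform.2 ⟨?_, fun p => ⟨rfl, rfl⟩, fun p u h1 h2 => ?_⟩
  · exact differentiable_pi.2 fun j p => hcomp p j
  · funext j
    rw [fderiv_app _ _ _ (hcomp p) j]
    fin_cases j
    · exact fd_const 0 p u
    · exact fd_const 0 p u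
    · exact h0 p u h1 h2

/-! ### Kform elements commute -/

lemma vbr_eq_zero {v w : VF 3} (hv : v ∈ Kform) (hw : w ∈ Kform) : vbr v w = 0 := by
  obtain ⟨hv1, hv2, hv3⟩ := mem_Kform.1 hv
  obtain ⟨hw1, hw2, hw3⟩ := mem_Kform.1 hw
  funext p
  show fderiv ℝ w p (v p) - fderiv ℝ v p (w p) = 0
  rw [hw3 p (v p) (hv2 p).1 (hv2 p).2, hv3 p (w p) (hw2 p).1 (hw2 p).2, sub_zero]

/-! ### Bilinearity of the bracket -/

lemma vbr_add_left (v v' w : VF 3) (hv : Differentiable ℝ v) (hv' : Differentiable ℝ v') :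
    vbr (v + v') w = vbr v w + vbr v' w := by
  funext p
  simp only [vbr, Pi.add_apply]
  rw [fderiv_add (hv p) (hv' p)]
  simp only [ContinuousLinearMap.add_apply, map_add]
  abel

lemma vbr_smul_left (c : ℝ) (v w : VF 3) (hv : Differentiable ℝ v) :
    vbr (c • v) w = c • vbr v w := by
  funext p
  simp only [vbr, Pi.smul_apply]
  rw [fderiv_const_smul (hv p) c]
  simp only [ContinuousLinearMap.smul_apply, map_smul, smul_sub]

lemma vbr_sub_left (v v' w : VF 3) (hv : Differentiable ℝ v) (hv' : Differentiable ℝ v') :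
    vbr (v - v') w = vbr v w - vbr v' w := by
  funext p
  simp only [vbr, Pi.sub_apply]
  rw [fderiv_sub (hv p) (hv' p)]
  simp only [ContinuousLinearMap.sub_apply, map_sub]
  abel

lemma vbr_add_right (v w w' : VF 3) (hw : Differentiable ℝ w) (hw' : Differentiable ℝ w') :
    vbr v (w + w') = vbr v w + vbr v w' := by
  funext p
  simp only [vbr, Pi.add_apply]
  rw [fderiv_add (hw p) (hw' p)]
  simp only [ContinuousLinearMap.add_apply, map_add]
  abel

lemma vbr_smul_right (c : ℝ) (v w : VF 3) (hw : Differentiable ℝ w) :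
    vbr v (c • w) = c • vbr v w := by
  funext p
  simp only [vbr, Pi.smul_apply]
  rw [fderiv_const_smul (hw p) c]
  simp only [ContinuousLinearMap.smul_apply, map_smul, smul_sub]

lemma vbr_sub_right (v w w' : VF 3) (hw : Differentiable ℝ w) (hw' : Differentiable ℝ w') :
    vbr v (w - w') = vbr v w - vbr v w' := by
  funext p
  simp only [vbr, Pi.sub_apply]
  rw [fderiv_sub (hw p) (hw' p)]
  simp only [ContinuousLinearMap.sub_apply, map_sub]
  abel

lemma vbr_zero_left (w : VF 3) : vbr 0 w = 0 := by
  funext p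
  show fderiv ℝ w p ((0 : VF 3) p) - fderiv ℝ (0 : VF 3) p (w p) = 0
  have h : fderiv ℝ (0 : VF 3) p = 0 := fderiv_const_apply _
  rw [h]
  simp

lemma vbr_zero_right (v : VF 3) : vbr v 0 = 0 := by
  funext p
  show fderiv ℝ (0 : VF 3) p (v p) - fderiv ℝ v p ((0 : VF 3) p) = 0
  have h : fderiv ℝ (0 : VF 3) p = 0 := fderiv_const_apply _
  rw [h]
  simp

lemma vbr_anti (v w : VF 3) : vbr v w = -vbr w v := by
  funext p
  show fderiv ℝ w p (v p) - fderiv ℝ v p (w p)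
      = -(fderiv ℝ v p (w p) - fderiv ℝ w p (v p))
  abel

/-! ### Differentiability of the generators -/

lemma diffEE : ∀ i : Fin 8, Differentiable ℝ (EE i) := by
  intro i
  fin_cases i
  · exact differentiable_const _
  · refine differentiable_pi.2 fun j => ?_
    fin_cases j
    · exact d_proj 1
    · exact differentiable_const 0
    · exact d_x2e
  · refine differentiable_pi.2 fun j => ?_
    fin_cases j
    · exact differentiable_const 0
    · exact differentiable_const 0
    · exact d_proj 0
  · exact differentiable_const _
  · refine differentiable_pi.2 fun j => ?_
    fin_cases j
    · exact differentiable_const 0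
    · exact differentiable_const 0
    · exact d_proj 1
  · refine differentiable_pi.2 fun j => ?_
    fin_cases j
    · exact differentiable_const 0
    · exact differentiable_const 0
    · exact d_xe
  · refine differentiable_pi.2 fun j => ?_
    fin_cases j
    · exact differentiable_const 0
    · exact differentiable_const 0
    · exact d_e
  · refine differentiable_pi.2 fun j => ?_
    fin_cases j
    · exact differentiable_const 0
    · exact differentiable_const 0
    · exact d_ye

/-! ### The generators of K are in Kform -/

lemma kf2 : EE 2 ∈ Kform :=
  mem_Kform_of (fun q => q 0) (d_proj 0) (fun p u h0 _ => by rw [fd_proj]; exact h0)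

lemma kf3 : EE 3 ∈ Kform := by
  have h := mem_Kform_of (fun _ => (1:ℝ)) (differentiable_const 1)
    (fun p u _ _ => fd_const 1 p u)
  have he : EE 3 = fun q : Fin 3 → ℝ => ![(0:ℝ), 0, 1] := by
    funext q j
    fin_cases j <;> rfl
  rw [he]
  exact h

lemma kf4 : EE 4 ∈ Kform :=
  mem_Kform_of (fun q => q 1) (d_proj 1) (fun p u _ h1 => by rw [fd_proj]; exact h1)

lemma kf5 : EE 5 ∈ Kform :=
  mem_Kform_of (fun q => q 0 * Real.exp (q 1)) d_xe
    (fun p u h0 h1 => by rw [fd_xe, h0, h1]; ring)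

lemma kf6 : EE 6 ∈ Kform :=
  mem_Kform_of (fun q => Real.exp (q 1)) d_e
    (fun p u _ h1 => by rw [fd_e, h1]; ring)

lemma kf7 : EE 7 ∈ Kform :=
  mem_Kform_of (fun q => q 1 * Real.exp (q 1)) d_ye
    (fun p u _ h1 => by rw [fd_ye, h1]; ring)

/-! ### Master bracket computations -/

lemma vbr_e1_K (g : (Fin 3 → ℝ) → ℝ) (hg : Differentiable ℝ g) :
    vbr (EE 0) (fun q => ![(0:ℝ), 0, g q])
      = fun p => ![(0:ℝ), 0, fderiv ℝ g p (Pi.single 0 1)] := by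
  funext p i
  have hcomp : ∀ j : Fin 3,
      DifferentiableAt ℝ (fun q : Fin 3 → ℝ => (![(0:ℝ), 0, g q] : Fin 3 → ℝ) j) p := by
    intro j
    fin_cases j
    · exact differentiableAt_const 0
    · exact differentiableAt_const 0
    · exact hg p
  have hE0 : fderiv ℝ (EE 0) p = 0 := fderiv_const_apply _
  show (fderiv ℝ (fun q => ![(0:ℝ), 0, g q]) p ((EE 0) p)
      - fderiv ℝ (EE 0) p ((fun q => ![(0:ℝ), 0, g q]) p)) i
      = (![(0:ℝ), 0, fderiv ℝ g p (Pi.single 0 1)] : Fin 3 → ℝ) i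
  rw [hE0]
  simp only [ContinuousLinearMap.zero_apply, Pi.sub_apply, Pi.zero_apply, sub_zero]
  rw [fderiv_app _ _ _ hcomp i]
  fin_cases i
  · exact fd_const 0 p _
  · exact fd_const 0 p _
  · rfl

lemma vbr_e2_K (g : (Fin 3 → ℝ) → ℝ) (hg : Differentiable ℝ g) :
    vbr (EE 1) (fun q => ![(0:ℝ), 0, g q])
      = fun p => ![(0:ℝ), 0, fderiv ℝ g p ![p 1, 0, p 0 ^ 2 * Real.exp (p 1)]] := by
  funext p i
  have hcomp : ∀ j : Fin 3,
      DifferentiableAt ℝ (fun q : Fin 3 → ℝ => (![(0:ℝ), 0, g q] : Fin 3 → ℝ) j) p := by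
    intro j
    fin_cases j
    · exact differentiableAt_const 0
    · exact differentiableAt_const 0
    · exact hg p
  have hE1comp : ∀ j : Fin 3, DifferentiableAt ℝ (fun q => EE 1 q j) p := by
    intro j
    fin_cases j
    · exact d_proj 1 p
    · exact differentiableAt_const 0
    · exact d_x2e p
  have hE1z : fderiv ℝ (EE 1) p (![(0:ℝ), 0, g p] : Fin 3 → ℝ) = 0 := by
    funext j
    rw [fderiv_app _ _ _ hE1comp j]
    fin_cases j
    · exact fd_proj 1 p _
    · exact fd_const 0 p _
    · have h := fd_x2e p (![(0:ℝ), 0, g p] : Fin 3 → ℝ)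
      norm_num at h
      exact h
  show (fderiv ℝ (fun q => ![(0:ℝ), 0, g q]) p ((EE 1) p)
      - fderiv ℝ (EE 1) p ((fun q => ![(0:ℝ), 0, g q]) p)) i
      = (![(0:ℝ), 0, fderiv ℝ g p ![p 1, 0, p 0 ^ 2 * Real.exp (p 1)]] : Fin 3 → ℝ) i
  rw [show ((fun q => ![(0:ℝ), 0, g q]) p : Fin 3 → ℝ) = (![(0:ℝ), 0, g p] : Fin 3 → ℝ)
      from rfl, hE1z]
  simp only [Pi.sub_apply, Pi.zero_apply, sub_zero]
  rw [fderiv_app _ _ _ hcomp i]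
  fin_cases i
  · exact fd_const 0 p _
  · exact fd_const 0 p _
  · rfl


lemma s0 : (Pi.single 0 1 : Fin 3 → ℝ) 0 = 1 := rfl
lemma s1 : (Pi.single 0 1 : Fin 3 → ℝ) 1 = 0 := rfl

lemma EE3_eq : EE 3 = fun _ : Fin 3 → ℝ => ![(0:ℝ), 0, 1] := by
  funext q j; fin_cases j <;> rfl

/-! ### The twelve bracket computations with e₁ and e₂ -/

lemma br02 : vbr (EE 0) (EE 2) = EE 3 := by
  rw [show EE 2 = (fun q : Fin 3 → ℝ => ![(0:ℝ), 0, q 0]) from rfl,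
    vbr_e1_K (fun q : Fin 3 → ℝ => q 0) (d_proj 0)]
  funext p i
  fin_cases i
  · rfl
  · rfl
  · show fderiv ℝ (fun q : Fin 3 → ℝ => q 0) p (Pi.single 0 1) = EE 3 p 2
    rw [fd_proj]; rfl

lemma br03 : vbr (EE 0) (EE 3) = 0 := by
  rw [EE3_eq, vbr_e1_K (fun _ : Fin 3 → ℝ => (1:ℝ)) (differentiable_const 1)]
  funext p i
  fin_cases i
  · rfl
  · rfl
  · show fderiv ℝ (fun _ : Fin 3 → ℝ => (1:ℝ)) p (Pi.single 0 1) = (0 : VF 3) p 2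
    rw [fd_const]; rfl

lemma br04 : vbr (EE 0) (EE 4) = 0 := by
  rw [show EE 4 = (fun q : Fin 3 → ℝ => ![(0:ℝ), 0, q 1]) from rfl,
    vbr_e1_K (fun q : Fin 3 → ℝ => q 1) (d_proj 1)]
  funext p i
  fin_cases i
  · rfl
  · rfl
  · show fderiv ℝ (fun q : Fin 3 → ℝ => q 1) p (Pi.single 0 1) = (0 : VF 3) p 2
    rw [fd_proj, s1]; rfl

lemma br05 : vbr (EE 0) (EE 5) = EE 6 := by
  rw [show EE 5 = (fun q : Fin 3 → ℝ => ![(0:ℝ), 0, q 0 * Real.exp (q 1)]) from rfl,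
    vbr_e1_K _ d_xe]
  funext p i
  fin_cases i
  · rfl
  · rfl
  · show fderiv ℝ (fun q : Fin 3 → ℝ => q 0 * Real.exp (q 1)) p (Pi.single 0 1) = EE 6 p 2
    rw [fd_xe, s0, s1]
    show Real.exp (p 1) * 1 + p 0 * Real.exp (p 1) * 0 = Real.exp (p 1)
    ring

lemma br06 : vbr (EE 0) (EE 6) = 0 := by
  rw [show EE 6 = (fun q : Fin 3 → ℝ => ![(0:ℝ), 0, Real.exp (q 1)]) from rfl,
    vbr_e1_K _ d_e]
  funext p i
  fin_cases i
  · rfl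
  · rfl
  · show fderiv ℝ (fun q : Fin 3 → ℝ => Real.exp (q 1)) p (Pi.single 0 1) = (0 : VF 3) p 2
    rw [fd_e, s1]
    show Real.exp (p 1) * 0 = (0:ℝ)
    ring

lemma br07 : vbr (EE 0) (EE 7) = 0 := by
  rw [show EE 7 = (fun q : Fin 3 → ℝ => ![(0:ℝ), 0, q 1 * Real.exp (q 1)]) from rfl,
    vbr_e1_K _ d_ye]
  funext p i
  fin_cases i
  · rfl
  · rfl
  · show fderiv ℝ (fun q : Fin 3 → ℝ => q 1 * Real.exp (q 1)) p (Pi.single 0 1) = (0 : VF 3) p 2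
    rw [fd_ye, s1]
    show Real.exp (p 1) * 0 + p 1 * Real.exp (p 1) * 0 = (0:ℝ)
    ring

lemma br12 : vbr (EE 1) (EE 2) = EE 4 := by
  rw [show EE 2 = (fun q : Fin 3 → ℝ => ![(0:ℝ), 0, q 0]) from rfl,
    vbr_e2_K (fun q : Fin 3 → ℝ => q 0) (d_proj 0)]
  funext p i
  fin_cases i
  · rfl
  · rfl
  · show fderiv ℝ (fun q : Fin 3 → ℝ => q 0) p ![p 1, 0, p 0 ^ 2 * Real.exp (p 1)] = EE 4 p 2
    rw [fd_proj]; rfl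

lemma br13 : vbr (EE 1) (EE 3) = 0 := by
  rw [EE3_eq, vbr_e2_K (fun _ : Fin 3 → ℝ => (1:ℝ)) (differentiable_const 1)]
  funext p i
  fin_cases i
  · rfl
  · rfl
  · show fderiv ℝ (fun _ : Fin 3 → ℝ => (1:ℝ)) p ![p 1, 0, p 0 ^ 2 * Real.exp (p 1)]
        = (0 : VF 3) p 2
    rw [fd_const]; rfl

lemma br14 : vbr (EE 1) (EE 4) = 0 := by
  rw [show EE 4 = (fun q : Fin 3 → ℝ => ![(0:ℝ), 0, q 1]) from rfl,
    vbr_e2_K (fun q : Fin 3 → ℝ => q 1) (d_proj 1)]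
  funext p i
  fin_cases i
  · rfl
  · rfl
  · show fderiv ℝ (fun q : Fin 3 → ℝ => q 1) p ![p 1, 0, p 0 ^ 2 * Real.exp (p 1)]
        = (0 : VF 3) p 2
    rw [fd_proj]; rfl

lemma br15 : vbr (EE 1) (EE 5) = EE 7 := by
  rw [show EE 5 = (fun q : Fin 3 → ℝ => ![(0:ℝ), 0, q 0 * Real.exp (q 1)]) from rfl,
    vbr_e2_K _ d_xe]
  funext p i
  fin_cases i
  · rfl
  · rfl
  · show fderiv ℝ (fun q : Fin 3 → ℝ => q 0 * Real.exp (q 1)) p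
        ![p 1, 0, p 0 ^ 2 * Real.exp (p 1)] = EE 7 p 2
    rw [fd_xe]
    show Real.exp (p 1) * p 1 + p 0 * Real.exp (p 1) * 0 = p 1 * Real.exp (p 1)
    ring

lemma br16 : vbr (EE 1) (EE 6) = 0 := by
  rw [show EE 6 = (fun q : Fin 3 → ℝ => ![(0:ℝ), 0, Real.exp (q 1)]) from rfl,
    vbr_e2_K _ d_e]
  funext p i
  fin_cases i
  · rfl
  · rfl
  · show fderiv ℝ (fun q : Fin 3 → ℝ => Real.exp (q 1)) p
        ![p 1, 0, p 0 ^ 2 * Real.exp (p 1)] = (0 : VF 3) p 2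
    rw [fd_e]
    show Real.exp (p 1) * 0 = (0:ℝ)
    ring

lemma br17 : vbr (EE 1) (EE 7) = 0 := by
  rw [show EE 7 = (fun q : Fin 3 → ℝ => ![(0:ℝ), 0, q 1 * Real.exp (q 1)]) from rfl,
    vbr_e2_K _ d_ye]
  funext p i
  fin_cases i
  · rfl
  · rfl
  · show fderiv ℝ (fun q : Fin 3 → ℝ => q 1 * Real.exp (q 1)) p
        ![p 1, 0, p 0 ^ 2 * Real.exp (p 1)] = (0 : VF 3) p 2
    rw [fd_ye]
    show Real.exp (p 1) * 0 + p 1 * Real.exp (p 1) * 0 = (0:ℝ)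
    ring

/-! ### [e₁, e₂] = 2 e₆ -/

lemma br01 : vbr (EE 0) (EE 1) = (2:ℝ) • EE 5 := by
  funext p i
  have hE1comp : ∀ j : Fin 3, DifferentiableAt ℝ (fun q => EE 1 q j) p := by
    intro j
    fin_cases j
    · exact d_proj 1 p
    · exact differentiableAt_const 0
    · exact d_x2e p
  have hE0 : fderiv ℝ (EE 0) p = 0 := fderiv_const_apply _
  show (fderiv ℝ (EE 1) p (EE 0 p) - fderiv ℝ (EE 0) p (EE 1 p)) i = ((2:ℝ) • EE 5) p i
  rw [hE0]
  simp only [ContinuousLinearMap.zero_apply, Pi.sub_apply, Pi.zero_apply, sub_zero]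
  rw [fderiv_app _ _ _ hE1comp i]
  fin_cases i
  · show fderiv ℝ (fun q : Fin 3 → ℝ => q 1) p (Pi.single 0 1) = ((2:ℝ) • EE 5) p 0
    rw [fd_proj, s1]
    show (0:ℝ) = 2 * 0
    ring
  · show fderiv ℝ (fun _ : Fin 3 → ℝ => (0:ℝ)) p (Pi.single 0 1) = ((2:ℝ) • EE 5) p 1
    rw [fd_const]
    show (0:ℝ) = 2 * 0
    ring
  · show fderiv ℝ (fun q : Fin 3 → ℝ => q 0 ^ 2 * Real.exp (q 1)) p (Pi.single 0 1)
        = ((2:ℝ) • EE 5) p 2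
    rw [fd_x2e, s0, s1]
    show 2 * p 0 * Real.exp (p 1) * 1 + p 0 ^ 2 * Real.exp (p 1) * 0
        = 2 * (p 0 * Real.exp (p 1))
    ring

/-! ### The submodule of fields taking equal values at (0,0,0) and (1,0,0) -/

def pA : Fin 3 → ℝ := ![0, 0, 0]
def pB : Fin 3 → ℝ := ![1, 0, 0]

def Mset : Submodule ℝ (VF 3) where
  carrier := {v | v pA = v pB}
  add_mem' := by
    intro v w hv hw
    show (v + w) pA = (v + w) pB
    simp only [Pi.add_apply]
    rw [show v pA = v pB from hv, show w pA = w pB from hw]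
  zero_mem' := rfl
  smul_mem' := by
    intro c v hv
    show (c • v) pA = (c • v) pB
    simp only [Pi.smul_apply]
    rw [show v pA = v pB from hv]

lemma mem_Mset {v : VF 3} : v ∈ Mset ↔ v pA = v pB := Iff.rfl

/-! ### The key induction over K -/

lemma keyK (K : Submodule ℝ (VF 3))
    (hK : K = Submodule.span ℝ ({EE 2, EE 3, EE 4, EE 5, EE 6, EE 7} : Set (VF 3))) :
    ∀ w ∈ K, w ∈ Kform ∧ (vbr (EE 0) w ∈ K ∧ vbr (EE 0) w ∈ Mset)
      ∧ (vbr (EE 1) w ∈ K ∧ vbr (EE 1) w ∈ Mset) := by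
  have hmem : ∀ y ∈ ({EE 2, EE 3, EE 4, EE 5, EE 6, EE 7} : Set (VF 3)), y ∈ K := by
    rw [hK]; exact fun y hy => Submodule.subset_span hy
  intro w hw
  rw [hK] at hw
  induction hw using Submodule.span_induction with
  | mem x hx =>
    simp only [Set.mem_insert_iff, Set.mem_singleton_iff] at hx
    rcases hx with rfl | rfl | rfl | rfl | rfl | rfl
    · exact ⟨kf2, ⟨by rw [br02]; exact hmem _ (by simp), by rw [br02]; exact mem_Mset.2 rfl⟩,
        ⟨by rw [br12]; exact hmem _ (by simp), by rw [br12]; exact mem_Mset.2 rfl⟩⟩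
    · exact ⟨kf3, ⟨by rw [br03]; exact K.zero_mem, by rw [br03]; exact Mset.zero_mem⟩,
        ⟨by rw [br13]; exact K.zero_mem, by rw [br13]; exact Mset.zero_mem⟩⟩
    · exact ⟨kf4, ⟨by rw [br04]; exact K.zero_mem, by rw [br04]; exact Mset.zero_mem⟩,
        ⟨by rw [br14]; exact K.zero_mem, by rw [br14]; exact Mset.zero_mem⟩⟩
    · exact ⟨kf5, ⟨by rw [br05]; exact hmem _ (by simp), by rw [br05]; exact mem_Mset.2 rfl⟩,
        ⟨by rw [br15]; exact hmem _ (by simp), by rw [br15]; exact mem_Mset.2 rfl⟩⟩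
    · exact ⟨kf6, ⟨by rw [br06]; exact K.zero_mem, by rw [br06]; exact Mset.zero_mem⟩,
        ⟨by rw [br16]; exact K.zero_mem, by rw [br16]; exact Mset.zero_mem⟩⟩
    · exact ⟨kf7, ⟨by rw [br07]; exact K.zero_mem, by rw [br07]; exact Mset.zero_mem⟩,
        ⟨by rw [br17]; exact K.zero_mem, by rw [br17]; exact Mset.zero_mem⟩⟩
  | zero =>
    refine ⟨Kform.zero_mem, ?_, ?_⟩ <;>
      rw [vbr_zero_right] <;> exact ⟨K.zero_mem, Mset.zero_mem⟩
  | add x y hx hy ihx ihy =>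
    have hdx := Kform_diff ihx.1
    have hdy := Kform_diff ihy.1
    refine ⟨Kform.add_mem ihx.1 ihy.1, ?_, ?_⟩
    · rw [vbr_add_right _ _ _ hdx hdy]
      exact ⟨K.add_mem ihx.2.1.1 ihy.2.1.1, Mset.add_mem ihx.2.1.2 ihy.2.1.2⟩
    · rw [vbr_add_right _ _ _ hdx hdy]
      exact ⟨K.add_mem ihx.2.2.1 ihy.2.2.1, Mset.add_mem ihx.2.2.2 ihy.2.2.2⟩
  | smul c x hx ih =>
    have hdx := Kform_diff ih.1
    refine ⟨Kform.smul_mem c ih.1, ?_, ?_⟩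
    · rw [vbr_smul_right _ _ _ hdx]
      exact ⟨K.smul_mem c ih.2.1.1, Mset.smul_mem c ih.2.1.2⟩
    · rw [vbr_smul_right _ _ _ hdx]
      exact ⟨K.smul_mem c ih.2.2.1, Mset.smul_mem c ih.2.2.2⟩

/-! ### Differentiability of everything in g -/

def Dsub : Submodule ℝ (VF 3) where
  carrier := {v | Differentiable ℝ v}
  add_mem' := fun hv hw => hv.add hw
  zero_mem' := fun p => differentiableAt_const _
  smul_mem' := fun c v hv => hv.const_smul c

lemma gdiff {x : VF 3} (hx : x ∈ Submodule.span ℝ (Set.range EE)) : Differentiable ℝ x := by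
  have h : Submodule.span ℝ (Set.range EE) ≤ Dsub :=
    Submodule.span_le.2 (by rintro y ⟨i, rfl⟩; exact diffEE i)
  exact h hx

/-! ### The ideal property -/

lemma idealK (g K : Submodule ℝ (VF 3))
    (hg : g = Submodule.span ℝ (Set.range EE))
    (hK : K = Submodule.span ℝ ({EE 2, EE 3, EE 4, EE 5, EE 6, EE 7} : Set (VF 3))) :
    ∀ v ∈ g, ∀ w ∈ K, vbr v w ∈ K := by
  intro v hv w hw
  obtain ⟨hwKf, hw0, hw1⟩ := keyK K hK w hw
  rw [hg] at hv
  induction hv using Submodule.span_induction with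
  | mem x hx =>
    obtain ⟨i, rfl⟩ := hx
    fin_cases i
    · exact hw0.1
    · exact hw1.1
    · show vbr (EE 2) w ∈ K
      rw [vbr_eq_zero kf2 hwKf]; exact K.zero_mem
    · show vbr (EE 3) w ∈ K
      rw [vbr_eq_zero kf3 hwKf]; exact K.zero_mem
    · show vbr (EE 4) w ∈ K
      rw [vbr_eq_zero kf4 hwKf]; exact K.zero_mem
    · show vbr (EE 5) w ∈ K
      rw [vbr_eq_zero kf5 hwKf]; exact K.zero_mem
    · show vbr (EE 6) w ∈ K
      rw [vbr_eq_zero kf6 hwKf]; exact K.zero_mem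
    · show vbr (EE 7) w ∈ K
      rw [vbr_eq_zero kf7 hwKf]; exact K.zero_mem
  | zero => rw [vbr_zero_left]; exact K.zero_mem
  | add x y hx hy ihx ihy =>
    rw [vbr_add_left _ _ _ (gdiff hx) (gdiff hy)]
    exact K.add_mem ihx ihy
  | smul c x hx ih =>
    rw [vbr_smul_left _ _ _ (gdiff hx)]
    exact K.smul_mem c ih


/-! ### The main theorem -/

theorem main (g K : Submodule ℝ (VF 3))
    (hg : g = Submodule.span ℝ (Set.range EE))
    (hK : K = Submodule.span ℝ ({EE 2, EE 3, EE 4, EE 5, EE 6, EE 7} : Set (VF 3))) :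
    IsAbelianSet (K : Set (VF 3)) ∧
    (∀ v ∈ g, ∀ w ∈ K, vbr v w ∈ K) ∧
    ¬ ∃ A : Submodule ℝ (VF 3), A ≤ g ∧
        (∀ a ∈ A, ∀ b ∈ A, vbr a b ∈ A) ∧ A ⊓ K = ⊥ ∧ A ⊔ K = g := by
  have hkey := keyK K hK
  refine ⟨?_, idealK g K hg hK, ?_⟩
  · intro v hv w hw
    exact vbr_eq_zero (hkey v hv).1 (hkey w hw).1
  · rintro ⟨A, hAg, hcl, hinf, hsup⟩
    have h0g : EE 0 ∈ A ⊔ K := by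
      rw [hsup, hg]; exact Submodule.subset_span ⟨0, rfl⟩
    have h1g : EE 1 ∈ A ⊔ K := by
      rw [hsup, hg]; exact Submodule.subset_span ⟨1, rfl⟩
    obtain ⟨a, haA, k, hkK, hak⟩ := Submodule.mem_sup.1 h0g
    obtain ⟨b, hbA, k', hk'K, hbk⟩ := Submodule.mem_sup.1 h1g
    have ha : a = EE 0 - k := (eq_sub_of_add_eq hak)
    have hb : b = EE 1 - k' := (eq_sub_of_add_eq hbk)
    have hkKf := (hkey k hkK).1
    have hk'Kf := (hkey k' hk'K).1
    have hkd : Differentiable ℝ k := Kform_diff hkKf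
    have hk'd : Differentiable ℝ k' := Kform_diff hk'Kf
    have hE0d : Differentiable ℝ (EE 0) := diffEE 0
    have hE1d : Differentiable ℝ (EE 1) := diffEE 1
    have hc : vbr a b = (2:ℝ) • EE 5 - vbr (EE 0) k' - vbr k (EE 1) := by
      rw [ha, hb, vbr_sub_left _ _ _ hE0d hkd,
        vbr_sub_right _ _ _ hE1d hk'd, vbr_sub_right _ _ _ hE1d hk'd,
        vbr_eq_zero hkKf hk'Kf, br01]
      abel
    have hcK : vbr a b ∈ K := by
      rw [hc]
      refine K.sub_mem (K.sub_mem (K.smul_mem _ ?_) ?_) ?_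
      · rw [hK]; exact Submodule.subset_span (by simp)
      · exact (hkey k' hk'K).2.1.1
      · rw [vbr_anti]; exact K.neg_mem (hkey k hkK).2.2.1
    have hcA : vbr a b ∈ A := hcl a haA b hbA
    have hc0 : vbr a b = 0 := by
      have hm : vbr a b ∈ A ⊓ K := ⟨hcA, hcK⟩
      rw [hinf] at hm
      simpa using hm
    have hM : (2:ℝ) • EE 5 ∈ Mset := by
      have h5 : (2:ℝ) • EE 5 = vbr (EE 0) k' + vbr k (EE 1) := by
        have h := hc
        rw [hc0] at h
        rw [sub_sub] at h
        exact sub_eq_zero.1 h.symm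
      rw [h5]
      refine Mset.add_mem (hkey k' hk'K).2.1.2 ?_
      rw [vbr_anti]
      exact Mset.neg_mem (hkey k hkK).2.2.2
    have heq : ((2:ℝ) • EE 5) pA = ((2:ℝ) • EE 5) pB := mem_Mset.1 hM
    have h2 := congrFun heq 2
    have hA2 : ((2:ℝ) • EE 5) pA 2 = 0 := by
      show (2:ℝ) * (pA 0 * Real.exp (pA 1)) = 0
      show (2:ℝ) * (0 * Real.exp (pA 1)) = 0
      ring
    have hB2 : ((2:ℝ) • EE 5) pB 2 = 2 := by
      show (2:ℝ) * (pB 0 * Real.exp (pB 1)) = 2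
      show (2:ℝ) * (1 * Real.exp 0) = 2
      rw [Real.exp_zero]; ring
    rw [hA2, hB2] at h2
    norm_num at h2

end S17

/-- Example 1, continued: for the 8-dimensional algebra g spanned by
e₁,…,e₈ and the abelian ideal K = ⟨e₃,…,e₈⟩ of elements supported by ∂_z, the extension
of g/K by K does not split: no complementary Lie subalgebra to K exists in g. -/
theorem statement17 (g K : Submodule ℝ (VF 3))
    (hg : g = Submodule.span ℝ (Set.range EE))
    (hK : K = Submodule.span ℝ ({EE 2, EE 3, EE 4, EE 5, EE 6, EE 7} : Set (VF 3))) :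
    -- K is an abelian ideal of g
    IsAbelianSet (K : Set (VF 3)) ∧
    (∀ v ∈ g, ∀ w ∈ K, vbr v w ∈ K) ∧
    -- and there is no complementary Lie subalgebra to K inside g
    ¬ ∃ A : Submodule ℝ (VF 3), A ≤ g ∧
        (∀ a ∈ A, ∀ b ∈ A, vbr a b ∈ A) ∧ A ⊓ K = ⊥ ∧ A ⊔ K = g := by
  exact S17.main g K hg hK
end
end

section
/- Let g be the Lie algebra of vector fields on ℝ³ generated by ∂_x, y∂_x, ∂_y + (x²+y²)∂_z and (x+y)∂_z. Then g equals the real span of e₁ = ∂_x, e₂ = y∂_x, e₃ = ∂_y + (x²+y²)∂_z, e₄ = ∂_z, e₅ = x∂_z, e₆ = y∂_z, e₇ = xy∂_z, e₈ = y²∂_z (an 8-dimensional nilpotent Lie algebra), and there is no Lie subalgebra S ⊆ g complementary to the ideal K = ker(Π|_g) = span{e₄,…,e₈}: for any choice a = e₁+k₁, b = e₂+k₂, c = e₃+k₃ with k₁,k₂,k₃ ∈ K, the relations [a,c] = 0 and [b,c] = −a cannot hold simultaneously. -/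
open scoped Classical
noncomputable section

/-- The eight vector fields e₁ = ∂_x, e₂ = y∂_x, e₃ = ∂_y + (x²+y²)∂_z, e₄ = ∂_z,
e₅ = x∂_z, e₆ = y∂_z, e₇ = xy∂_z, e₈ = y²∂_z. -/
def FF : Fin 8 → VF 3 :=
  ![dd 0,
    fun p => ![p 1, (0 : ℝ), (0 : ℝ)],
    fun p => ![(0 : ℝ), (1 : ℝ), (p 0) ^ 2 + (p 1) ^ 2],
    dd 2,
    fun p => ![(0 : ℝ), (0 : ℝ), p 0],
    fun p => ![(0 : ℝ), (0 : ℝ), p 1],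
    fun p => ![(0 : ℝ), (0 : ℝ), p 0 * p 1],
    fun p => ![(0 : ℝ), (0 : ℝ), (p 1) ^ 2]]


section Aux

def pr (i : Fin 3) : (Fin 3 → ℝ) →L[ℝ] ℝ := ContinuousLinearMap.proj i

lemma hpr (i : Fin 3) (p : Fin 3 → ℝ) : HasFDerivAt (fun q : Fin 3 → ℝ => q i) (pr i) p :=
  (pr i).hasFDerivAt

lemma hsq (i : Fin 3) (p : Fin 3 → ℝ) :
    HasFDerivAt (fun q : Fin 3 → ℝ => q i ^ 2) ((2 * p i) • pr i) p := by
  have e : (fun q : Fin 3 → ℝ => q i ^ 2) = fun q => q i * q i := by funext q; ring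
  rw [e]
  have h := (hpr i p).mul (hpr i p)
  refine h.congr_fderiv ?_
  ext u
  simp [pr]
  ring

def LFF : Fin 8 → (Fin 3 → ℝ) → ((Fin 3 → ℝ) →L[ℝ] (Fin 3 → ℝ)) :=
  ![fun _ => 0,
    fun _ => ContinuousLinearMap.pi ![pr 1, 0, 0],
    fun p => ContinuousLinearMap.pi ![0, 0, (2 * p 0) • pr 0 + (2 * p 1) • pr 1],
    fun _ => 0,
    fun _ => ContinuousLinearMap.pi ![0, 0, pr 0],
    fun _ => ContinuousLinearMap.pi ![0, 0, pr 1],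
    fun p => ContinuousLinearMap.pi ![0, 0, (p 1) • pr 0 + (p 0) • pr 1],
    fun p => ContinuousLinearMap.pi ![0, 0, (2 * p 1) • pr 1]]

lemma hFF (i : Fin 8) (p : Fin 3 → ℝ) : HasFDerivAt (FF i) (LFF i p) p := by
  fin_cases i
  · exact hasFDerivAt_const _ _
  · show HasFDerivAt (fun p : Fin 3 → ℝ => (![p 1, (0:ℝ), (0:ℝ)] : Fin 3 → ℝ))
      (ContinuousLinearMap.pi ![pr 1, 0, 0]) p
    rw [hasFDerivAt_pi']
    intro m
    rw [ContinuousLinearMap.proj_pi]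
    fin_cases m
    · exact hpr 1 p
    · exact hasFDerivAt_const _ _
    · exact hasFDerivAt_const _ _
  · show HasFDerivAt (fun p : Fin 3 → ℝ => (![(0:ℝ), (1:ℝ), (p 0)^2 + (p 1)^2] : Fin 3 → ℝ))
      (ContinuousLinearMap.pi ![0, 0, (2 * p 0) • pr 0 + (2 * p 1) • pr 1]) p
    rw [hasFDerivAt_pi']
    intro m
    rw [ContinuousLinearMap.proj_pi]
    fin_cases m
    · exact hasFDerivAt_const _ _
    · exact hasFDerivAt_const _ _
    · have h := (hsq 0 p).add (hsq 1 p)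
      exact h
  · exact hasFDerivAt_const _ _
  · show HasFDerivAt (fun p : Fin 3 → ℝ => (![(0:ℝ), (0:ℝ), p 0] : Fin 3 → ℝ))
      (ContinuousLinearMap.pi ![0, 0, pr 0]) p
    rw [hasFDerivAt_pi']
    intro m
    rw [ContinuousLinearMap.proj_pi]
    fin_cases m
    · exact hasFDerivAt_const _ _
    · exact hasFDerivAt_const _ _
    · exact hpr 0 p
  · show HasFDerivAt (fun p : Fin 3 → ℝ => (![(0:ℝ), (0:ℝ), p 1] : Fin 3 → ℝ))
      (ContinuousLinearMap.pi ![0, 0, pr 1]) p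
    rw [hasFDerivAt_pi']
    intro m
    rw [ContinuousLinearMap.proj_pi]
    fin_cases m
    · exact hasFDerivAt_const _ _
    · exact hasFDerivAt_const _ _
    · exact hpr 1 p
  · show HasFDerivAt (fun p : Fin 3 → ℝ => (![(0:ℝ), (0:ℝ), p 0 * p 1] : Fin 3 → ℝ))
      (ContinuousLinearMap.pi ![0, 0, (p 1) • pr 0 + (p 0) • pr 1]) p
    rw [hasFDerivAt_pi']
    intro m
    rw [ContinuousLinearMap.proj_pi]
    fin_cases m
    · exact hasFDerivAt_const _ _
    · exact hasFDerivAt_const _ _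
    · have h := (hpr 0 p).mul (hpr 1 p)
      refine h.congr_fderiv ?_
      ext u
      simp [pr]
      ring
  · show HasFDerivAt (fun p : Fin 3 → ℝ => (![(0:ℝ), (0:ℝ), (p 1)^2] : Fin 3 → ℝ))
      (ContinuousLinearMap.pi ![0, 0, (2 * p 1) • pr 1]) p
    rw [hasFDerivAt_pi']
    intro m
    rw [ContinuousLinearMap.proj_pi]
    fin_cases m
    · exact hasFDerivAt_const _ _
    · exact hasFDerivAt_const _ _
    · have h := hsq 1 p
      exact h

def DFF : Fin 8 → (Fin 3 → ℝ) → (Fin 3 → ℝ) → (Fin 3 → ℝ) :=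
  ![fun _ _ => 0,
    fun _ u => ![u 1, 0, 0],
    fun p u => ![0, 0, 2 * p 0 * u 0 + 2 * p 1 * u 1],
    fun _ _ => 0,
    fun _ u => ![0, 0, u 0],
    fun _ u => ![0, 0, u 1],
    fun p u => ![0, 0, p 1 * u 0 + p 0 * u 1],
    fun p u => ![0, 0, 2 * p 1 * u 1]]

lemma diffFF (i : Fin 8) (p : Fin 3 → ℝ) : DifferentiableAt ℝ (FF i) p :=
  (hFF i p).differentiableAt

lemma fderiv_FF_apply (i : Fin 8) (p u : Fin 3 → ℝ) :
    fderiv ℝ (FF i) p u = DFF i p u := by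
  rw [(hFF i p).fderiv]
  fin_cases i <;> (funext m; fin_cases m <;> rfl)

lemma vbr_comb {N M : ℕ} (v : Fin N → VF 3) (w : Fin M → VF 3)
    (hv : ∀ i p, DifferentiableAt ℝ (v i) p) (hw : ∀ j p, DifferentiableAt ℝ (w j) p)
    (c : Fin N → ℝ) (d : Fin M → ℝ) :
    vbr (∑ i, c i • v i) (∑ j, d j • w j) = ∑ i, ∑ j, (c i * d j) • vbr (v i) (w j) := by
  have hV : (∑ i, c i • v i) = fun q => ∑ i, c i • v i q := by
    funext q; simp
  have hW : (∑ j, d j • w j) = fun q => ∑ j, d j • w j q := by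
    funext q; simp
  funext p
  have dV : fderiv ℝ (∑ i, c i • v i) p = ∑ i, c i • fderiv ℝ (v i) p := by
    rw [hV, fderiv_fun_sum (A := fun i q => c i • v i q) (fun i _ => ((hv i p).const_smul (c i)))]
    exact Finset.sum_congr rfl fun i _ => fderiv_fun_const_smul (hv i p) (c i)
  have dW : fderiv ℝ (∑ j, d j • w j) p = ∑ j, d j • fderiv ℝ (w j) p := by
    rw [hW, fderiv_fun_sum (A := fun j q => d j • w j q) (fun j _ => ((hw j p).const_smul (d j)))]
    exact Finset.sum_congr rfl fun j _ => fderiv_fun_const_smul (hw j p) (d j)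
  show fderiv ℝ _ p (_) - fderiv ℝ _ p (_) = _
  rw [dV, dW]
  have eV : (∑ i, c i • v i) p = ∑ i, c i • v i p := by rw [hV]
  have eW : (∑ j, d j • w j) p = ∑ j, d j • w j p := by rw [hW]
  rw [eV, eW]
  have h1 : (∑ j, d j • fderiv ℝ (w j) p) (∑ i, c i • v i p)
      = ∑ i, ∑ j, (c i * d j) • fderiv ℝ (w j) p (v i p) := by
    simp only [ContinuousLinearMap.sum_apply, ContinuousLinearMap.smul_apply, map_sum,
      map_smul, Finset.smul_sum, smul_smul]
  have h2 : (∑ i, c i • fderiv ℝ (v i) p) (∑ j, d j • w j p)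
      = ∑ i, ∑ j, (c i * d j) • fderiv ℝ (v i) p (w j p) := by
    simp only [ContinuousLinearMap.sum_apply, ContinuousLinearMap.smul_apply, map_sum,
      map_smul, Finset.smul_sum, smul_smul]
    rw [Finset.sum_comm]
    exact Finset.sum_congr rfl fun i _ => Finset.sum_congr rfl fun j _ => by rw [mul_comm]
  rw [h1, h2, ← Finset.sum_sub_distrib]
  have key : ∀ i, ((∑ j, (c i * d j) • fderiv ℝ (w j) p (v i p))
      - ∑ j, (c i * d j) • fderiv ℝ (v i) p (w j p))
      = ∑ j, (c i * d j) • vbr (v i) (w j) p := by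
    intro i
    rw [← Finset.sum_sub_distrib]
    refine Finset.sum_congr rfl fun j _ => ?_
    simp [vbr, smul_sub]
  calc (∑ i, ((∑ j, (c i * d j) • fderiv ℝ (w j) p (v i p))
      - ∑ j, (c i * d j) • fderiv ℝ (v i) p (w j p)))
      = ∑ i, ∑ j, (c i * d j) • vbr (v i) (w j) p :=
        Finset.sum_congr rfl fun i _ => key i
    _ = (∑ i, ∑ j, (c i * d j) • vbr (v i) (w j)) p := by simp

@[simp] lemma dd0 : dd (0:Fin 3) = fun _ => ![(1:ℝ),0,0] := by
  funext p m; fin_cases m <;> rfl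
@[simp] lemma dd2 : dd (2:Fin 3) = fun _ => ![(0:ℝ),0,1] := by
  funext p m; fin_cases m <;> rfl

@[simp] lemma FF0 : FF 0 = fun _ => ![(1:ℝ),0,0] := by rw [show FF 0 = dd 0 from rfl, dd0]
@[simp] lemma FF1 : FF 1 = fun p => ![p 1, (0:ℝ), (0:ℝ)] := rfl
@[simp] lemma FF2 : FF 2 = fun p => ![(0:ℝ), (1:ℝ), (p 0)^2 + (p 1)^2] := rfl
@[simp] lemma FF3 : FF 3 = fun _ => ![(0:ℝ),0,1] := by rw [show FF 3 = dd 2 from rfl, dd2]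
@[simp] lemma FF4 : FF 4 = fun p => ![(0:ℝ), (0:ℝ), p 0] := rfl
@[simp] lemma FF5 : FF 5 = fun p => ![(0:ℝ), (0:ℝ), p 1] := rfl
@[simp] lemma FF6 : FF 6 = fun p => ![(0:ℝ), (0:ℝ), p 0 * p 1] := rfl
@[simp] lemma FF7 : FF 7 = fun p => ![(0:ℝ), (0:ℝ), (p 1)^2] := rfl

lemma DFF0 : DFF 0 = fun _ _ => 0 := rfl
lemma DFF1 : DFF 1 = fun _ u => ![u 1, 0, 0] := rfl
lemma DFF2 : DFF 2 = fun p u => ![0, 0, 2 * p 0 * u 0 + 2 * p 1 * u 1] := rfl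
lemma DFF3 : DFF 3 = fun _ _ => 0 := rfl
lemma DFF4 : DFF 4 = fun _ u => ![0, 0, u 0] := rfl
lemma DFF5 : DFF 5 = fun _ u => ![0, 0, u 1] := rfl
lemma DFF6 : DFF 6 = fun p u => ![0, 0, p 1 * u 0 + p 0 * u 1] := rfl
lemma DFF7 : DFF 7 = fun p u => ![0, 0, 2 * p 1 * u 1] := rfl

def sgl (k : Fin 8) (c : ℤ) : Fin 8 → ℤ := fun l => if l = k then c else 0

def BcU : Fin 8 → Fin 8 → Fin 8 → ℤ := fun i j =>
  if i = 0 ∧ j = 2 then sgl 4 2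
  else if i = 0 ∧ j = 4 then sgl 3 1
  else if i = 0 ∧ j = 6 then sgl 5 1
  else if i = 1 ∧ j = 2 then (fun l => if l = 0 then -1 else if l = 6 then 2 else 0)
  else if i = 1 ∧ j = 4 then sgl 5 1
  else if i = 1 ∧ j = 6 then sgl 7 1
  else if i = 2 ∧ j = 5 then sgl 3 1
  else if i = 2 ∧ j = 6 then sgl 4 1
  else if i = 2 ∧ j = 7 then sgl 5 2
  else 0

def BcZ : Fin 8 → Fin 8 → Fin 8 → ℤ := fun i j k => BcU i j k - BcU j i k

def Bc : Fin 8 → Fin 8 → Fin 8 → ℝ := fun i j k => (BcZ i j k : ℝ)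

set_option maxHeartbeats 3200000 in
lemma brFF (i j : Fin 8) : vbr (FF i) (FF j) = ∑ k, Bc i j k • FF k := by
  funext p m
  have h : vbr (FF i) (FF j) p m = DFF j p (FF i p) m - DFF i p (FF j p) m := by
    simp only [vbr, Pi.sub_apply, fderiv_FF_apply]
  rw [h, Finset.sum_apply, Finset.sum_apply]
  simp only [Pi.smul_apply, smul_eq_mul]
  fin_cases i <;> fin_cases j <;> fin_cases m <;>
    (simp +decide [DFF0, DFF1, DFF2, DFF3, DFF4, DFF5, DFF6, DFF7, Bc, BcZ, BcU, sgl,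
      Fin.sum_univ_eight]; try ring)

lemma sum_rot (f : Fin 8 → Fin 8 → Fin 8 → VF 3) :
    ∑ i, ∑ j, ∑ k, f i j k = ∑ k, ∑ i, ∑ j, f i j k := by
  have h1 : ∑ i, ∑ j, ∑ k, f i j k = ∑ i, ∑ k, ∑ j, f i j k :=
    Finset.sum_congr rfl fun i _ => Finset.sum_comm
  rw [h1]
  exact Finset.sum_comm

lemma vbr_combFF (c d : Fin 8 → ℝ) :
    vbr (∑ i, c i • FF i) (∑ j, d j • FF j)
      = ∑ k, (∑ i, ∑ j, c i * d j * Bc i j k) • FF k := by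
  rw [vbr_comb FF FF diffFF diffFF c d]
  have step : ∀ i j : Fin 8, (c i * d j) • vbr (FF i) (FF j)
      = ∑ k, (c i * d j * Bc i j k) • FF k := by
    intro i j
    rw [brFF, Finset.smul_sum]
    exact Finset.sum_congr rfl fun k _ => smul_smul _ _ _
  simp only [step]
  rw [sum_rot]
  refine Finset.sum_congr rfl fun k _ => ?_
  rw [Finset.sum_smul]
  exact Finset.sum_congr rfl fun i _ => by rw [Finset.sum_smul]

lemma FF_li : LinearIndependent ℝ FF := by
  rw [Fintype.linearIndependent_iff]
  intro cf h
  have hv : ∀ p m, ∑ i, cf i * FF i p m = 0 := by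
    intro p m
    have := congrFun (congrFun h p) m
    simpa [Finset.sum_apply] using this
  have e1 := hv ![0,0,0] 0
  have e2 := hv ![0,1,0] 0
  have e3 := hv ![0,0,0] 1
  have e4 := hv ![0,0,0] 2
  have e5 := hv ![1,0,0] 2
  have e6 := hv ![2,0,0] 2
  have e7 := hv ![0,1,0] 2
  have e8 := hv ![0,2,0] 2
  have e9 := hv ![1,1,0] 2
  norm_num [Fin.sum_univ_eight, Matrix.cons_val_two, Matrix.tail_cons, Matrix.head_cons] at e1 e2 e3 e4 e5 e6 e7 e8 e9
  intro i
  have hall : ∀ i : Fin 8, i = 0 ∨ i = 1 ∨ i = 2 ∨ i = 3 ∨ i = 4 ∨ i = 5 ∨ i = 6 ∨ i = 7 := by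
    decide
  rcases hall i with rfl|rfl|rfl|rfl|rfl|rfl|rfl|rfl <;> linarith

lemma coeff_ext {α β : Fin 8 → ℝ} (h : ∑ k, α k • FF k = ∑ k, β k • FF k) :
    ∀ k, α k = β k := by
  have h2 : ∑ k, (α k - β k) • FF k = 0 := by
    simp [sub_smul, Finset.sum_sub_distrib, h]
  intro k
  have := Fintype.linearIndependent_iff.1 FF_li (fun k => α k - β k) h2 k
  linarith [this]

def Msub (s : Finset (Fin 8)) : Submodule ℝ (VF 3) := Submodule.span ℝ (FF '' ↑s)

lemma sum_mem_Msub (s : Finset (Fin 8)) (α : Fin 8 → ℝ) (h : ∀ k, k ∉ s → α k = 0) :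
    ∑ k, α k • FF k ∈ Msub s := by
  refine Submodule.sum_mem _ fun k _ => ?_
  by_cases hk : k ∈ s
  · exact Submodule.smul_mem _ _ (Submodule.subset_span ⟨k, hk, rfl⟩)
  · rw [h k hk, zero_smul]; exact Submodule.zero_mem _

lemma Msub_rep {s : Finset (Fin 8)} {w : VF 3} (hw : w ∈ Msub s) :
    ∃ α : Fin 8 → ℝ, (∀ k, k ∉ s → α k = 0) ∧ w = ∑ k, α k • FF k := by
  induction hw using Submodule.span_induction with
  | mem x hx =>
    obtain ⟨k, hk, rfl⟩ := hx
    refine ⟨fun l => if l = k then 1 else 0, ?_, ?_⟩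
    · intro l hl
      exact if_neg (by rintro rfl; exact hl (Finset.mem_coe.1 hk))
    · simp [ite_smul]
  | zero => exact ⟨0, by simp, by simp⟩
  | add x y hx hy ihx ihy =>
    obtain ⟨α, hα, rfl⟩ := ihx
    obtain ⟨β, hβ, rfl⟩ := ihy
    exact ⟨α + β, fun k hk => by simp [hα k hk, hβ k hk],
      by simp [add_smul, Finset.sum_add_distrib]⟩
  | smul r x hx ih =>
    obtain ⟨α, hα, rfl⟩ := ih
    exact ⟨r • α, fun k hk => by simp [hα k hk], by simp [Finset.smul_sum, smul_smul]⟩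

lemma hgM : Submodule.span ℝ (Set.range FF) = Msub Finset.univ := by
  rw [Msub, Finset.coe_univ, Set.image_univ]

lemma br_closed : ∀ v ∈ Submodule.span ℝ (Set.range FF), ∀ w ∈ Submodule.span ℝ (Set.range FF),
    vbr v w ∈ Submodule.span ℝ (Set.range FF) := by
  intro v hv w hw
  obtain ⟨c, rfl⟩ := (Submodule.mem_span_range_iff_exists_fun ℝ).1 hv
  obtain ⟨d, rfl⟩ := (Submodule.mem_span_range_iff_exists_fun ℝ).1 hw
  rw [vbr_combFF]
  exact Submodule.sum_mem _ fun k _ =>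
    Submodule.smul_mem _ _ (Submodule.subset_span ⟨k, rfl⟩)

lemma single_add_rep (m : Fin 8) (α : Fin 8 → ℝ) :
    FF m + ∑ k, α k • FF k = ∑ k, ((Pi.single m 1 : Fin 8 → ℝ) k + α k) • FF k := by
  simp [add_smul, Finset.sum_add_distrib, Pi.single_apply, ite_smul]

lemma br_c0 (A C : Fin 8 → ℝ) :
    ∑ i, ∑ j, A i * C j * Bc i j 0 = A 2 * C 1 - A 1 * C 2 := by
  simp +decide [Fin.sum_univ_eight, Bc, BcZ, BcU, sgl]
  ring

lemma br_c1 (A C : Fin 8 → ℝ) : ∑ i, ∑ j, A i * C j * Bc i j 1 = 0 := by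
  simp +decide [Fin.sum_univ_eight, Bc, BcZ, BcU, sgl]

lemma br_c2 (A C : Fin 8 → ℝ) : ∑ i, ∑ j, A i * C j * Bc i j 2 = 0 := by
  simp +decide [Fin.sum_univ_eight, Bc, BcZ, BcU, sgl]

lemma br_c4 (A C : Fin 8 → ℝ) :
    ∑ i, ∑ j, A i * C j * Bc i j 4
      = 2 * (A 0 * C 2 - A 2 * C 0) + (A 2 * C 6 - A 6 * C 2) := by
  simp +decide [Fin.sum_univ_eight, Bc, BcZ, BcU, sgl]
  ring

lemma br_c6 (A C : Fin 8 → ℝ) :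
    ∑ i, ∑ j, A i * C j * Bc i j 6 = 2 * (A 1 * C 2 - A 2 * C 1) := by
  simp +decide [Fin.sum_univ_eight, Bc, BcZ, BcU, sgl]
  ring

lemma noRel (k₁ k₂ k₃ : VF 3)
    (h1 : k₁ ∈ Msub {3,4,5,6,7}) (h2 : k₂ ∈ Msub {3,4,5,6,7}) (h3 : k₃ ∈ Msub {3,4,5,6,7}) :
    ¬ (vbr (FF 0 + k₁) (FF 2 + k₃) = 0 ∧
       vbr (FF 1 + k₂) (FF 2 + k₃) = -(FF 0 + k₁)) := by
  rintro ⟨e1, e2⟩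
  obtain ⟨α, hα, rfl⟩ := Msub_rep h1
  obtain ⟨β, hβ, rfl⟩ := Msub_rep h2
  obtain ⟨γ, hγ, rfl⟩ := Msub_rep h3
  rw [single_add_rep 0, single_add_rep 2, vbr_combFF,
    show (0 : VF 3) = ∑ k : Fin 8, (0:ℝ) • FF k from by simp] at e1
  rw [single_add_rep 1, single_add_rep 2, single_add_rep 0, vbr_combFF,
    show -(∑ k, ((Pi.single 0 1 : Fin 8 → ℝ) k + α k) • FF k)
      = ∑ k, (-((Pi.single 0 1 : Fin 8 → ℝ) k + α k)) • FF k from by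
        rw [← Finset.sum_neg_distrib]
        exact Finset.sum_congr rfl fun k _ => (neg_smul _ _).symm] at e2
  have q1 := coeff_ext e1 4
  have q2 := coeff_ext e2 6
  rw [br_c4] at q1
  rw [br_c6] at q2
  have hα0 := hα 0 (by decide)
  have hα1 := hα 1 (by decide)
  have hα2 := hα 2 (by decide)
  have hβ1 := hβ 1 (by decide)
  have hβ2 := hβ 2 (by decide)
  have hγ0 := hγ 0 (by decide)
  have hγ1 := hγ 1 (by decide)
  have hγ2 := hγ 2 (by decide)
  simp +decide [Pi.single_apply, hα0, hα1, hα2, hβ1, hβ2, hγ0, hγ1, hγ2] at q1 q2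
  linarith [q1, q2]

end Aux

/-- Example 2: the Lie algebra g of vector fields on ℝ³ generated by ∂_x,
y∂_x, ∂_y + (x²+y²)∂_z and (x+y)∂_z equals the span of e₁,…,e₈ above, an 8-dimensional
nilpotent algebra; and no Lie subalgebra S of g is complementary to the ideal
K = ker(Π|_g) = ⟨e₄,…,e₈⟩: for any k₁, k₂, k₃ ∈ K, the relations [e₁+k₁, e₃+k₃] = 0 and
[e₂+k₂, e₃+k₃] = −(e₁+k₁) cannot hold simultaneously. -/

theorem statement18 (g K : Submodule ℝ (VF 3))
    (hg : g = Submodule.span ℝ (Set.range FF))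
    (hK : K = Submodule.span ℝ ({FF 3, FF 4, FF 5, FF 6, FF 7} : Set (VF 3))) :
    -- g is generated as a Lie algebra by the four given fields
    liealgGen ({FF 0, FF 1, FF 2,
        fun p => ![(0 : ℝ), (0 : ℝ), p 0 + p 1]} : Set (VF 3)) = g ∧
    (∀ v ∈ g, ∀ w ∈ g, vbr v w ∈ g) ∧
    LinearIndependent ℝ FF ∧
    Module.finrank ℝ ↥g = 8 ∧
    IsNilpotentVF g ∧
    -- K = ker(Π|_g)
    (K : Set (VF 3)) = {v | v ∈ g ∧ Pzl v = 0} ∧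
    -- no complementary Lie subalgebra to K exists in g
    (¬ ∃ S : Submodule ℝ (VF 3), S ≤ g ∧
        (∀ a ∈ S, ∀ b ∈ S, vbr a b ∈ S) ∧ S ⊓ K = ⊥ ∧ S ⊔ K = g) ∧
    -- indeed the required relations are contradictory
    (∀ k₁ ∈ K, ∀ k₂ ∈ K, ∀ k₃ ∈ K,
      ¬ (vbr (FF 0 + k₁) (FF 2 + k₃) = 0 ∧
         vbr (FF 1 + k₂) (FF 2 + k₃) = -(FF 0 + k₁))) := by
  have hKM : K = Msub {3,4,5,6,7} := by
    have himg : FF '' (↑({3,4,5,6,7} : Finset (Fin 8)) : Set (Fin 8))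
        = {FF 3, FF 4, FF 5, FF 6, FF 7} := by
      rw [show ((↑({3,4,5,6,7} : Finset (Fin 8))) : Set (Fin 8))
        = ({3,4,5,6,7} : Set (Fin 8)) from by simp]
      simp [Set.image_insert_eq]
    rw [hK, Msub, himg]
  refine ⟨?_, ?_, ?_, ?_, ?_, ?_, ?_, ?_⟩
  · -- liealgGen = g
    have h45 : (fun p => ![(0 : ℝ), (0 : ℝ), p 0 + p 1]) = FF 4 + FF 5 := by
      funext p m
      fin_cases m <;> simp
    have hsub : ∀ v ∈ ({FF 0, FF 1, FF 2,
        fun p => ![(0 : ℝ), (0 : ℝ), p 0 + p 1]} : Set (VF 3)),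
        v ∈ liealgGen ({FF 0, FF 1, FF 2,
          fun p => ![(0 : ℝ), (0 : ℝ), p 0 + p 1]} : Set (VF 3)) :=
      fun v hv => Submodule.mem_sInf.2 fun h hh => hh.1 hv
    have hbrL : ∀ v ∈ liealgGen ({FF 0, FF 1, FF 2,
        fun p => ![(0 : ℝ), (0 : ℝ), p 0 + p 1]} : Set (VF 3)),
        ∀ w ∈ liealgGen ({FF 0, FF 1, FF 2,
          fun p => ![(0 : ℝ), (0 : ℝ), p 0 + p 1]} : Set (VF 3)),
        vbr v w ∈ liealgGen ({FF 0, FF 1, FF 2,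
          fun p => ![(0 : ℝ), (0 : ℝ), p 0 + p 1]} : Set (VF 3)) := by
      intro v hv w hw
      exact Submodule.mem_sInf.2 fun h hh =>
        hh.2 v (Submodule.mem_sInf.1 hv h hh) w (Submodule.mem_sInf.1 hw h hh)
    apply le_antisymm
    · refine sInf_le ⟨?_, ?_⟩
      · intro v hv
        simp only [Set.mem_insert_iff, Set.mem_singleton_iff] at hv
        rcases hv with rfl | rfl | rfl | rfl
        · rw [hg]; exact Submodule.subset_span ⟨0, rfl⟩
        · rw [hg]; exact Submodule.subset_span ⟨1, rfl⟩
        · rw [hg]; exact Submodule.subset_span ⟨2, rfl⟩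
        · rw [hg, h45]
          exact Submodule.add_mem _ (Submodule.subset_span ⟨4, rfl⟩)
            (Submodule.subset_span ⟨5, rfl⟩)
      · intro v hv w hw
        rw [hg] at hv hw ⊢
        exact br_closed v hv w hw
    · rw [hg, Submodule.span_le]
      have hE0 := hsub _ (Or.inl rfl)
      have hE1 := hsub _ (Or.inr (Or.inl rfl))
      have hE2 := hsub _ (Or.inr (Or.inr (Or.inl rfl)))
      have hE45 : FF 4 + FF 5 ∈ liealgGen ({FF 0, FF 1, FF 2,
          fun p => ![(0 : ℝ), (0 : ℝ), p 0 + p 1]} : Set (VF 3)) := by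
        exact hsub _ (Or.inr (Or.inr (Or.inr h45.symm)))
      have hb02 : vbr (FF 0) (FF 2) = (2:ℝ) • FF 4 := by
        rw [brFF]
        simp +decide [Bc, BcZ, BcU, sgl, Fin.sum_univ_eight]
      have hE4 : FF 4 ∈ liealgGen ({FF 0, FF 1, FF 2,
          fun p => ![(0 : ℝ), (0 : ℝ), p 0 + p 1]} : Set (VF 3)) := by
        have h := hbrL _ hE0 _ hE2
        rw [hb02] at h
        have h2 := Submodule.smul_mem _ (2⁻¹:ℝ) h
        rwa [smul_smul, show (2⁻¹:ℝ) * 2 = 1 from by norm_num, one_smul] at h2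
      have hE5 : FF 5 ∈ liealgGen ({FF 0, FF 1, FF 2,
          fun p => ![(0 : ℝ), (0 : ℝ), p 0 + p 1]} : Set (VF 3)) := by
        have h := Submodule.sub_mem _ hE45 hE4
        rwa [add_sub_cancel_left] at h
      have hb04 : vbr (FF 0) (FF 4) = FF 3 := by
        rw [brFF]
        simp +decide [Bc, BcZ, BcU, sgl, Fin.sum_univ_eight]
      have hE3 : FF 3 ∈ liealgGen ({FF 0, FF 1, FF 2,
          fun p => ![(0 : ℝ), (0 : ℝ), p 0 + p 1]} : Set (VF 3)) := by
        have h := hbrL _ hE0 _ hE4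
        rwa [hb04] at h
      have hb12 : vbr (FF 1) (FF 2) = -FF 0 + (2:ℝ) • FF 6 := by
        rw [brFF]
        simp +decide [Bc, BcZ, BcU, sgl, Fin.sum_univ_eight]
      have hE6 : FF 6 ∈ liealgGen ({FF 0, FF 1, FF 2,
          fun p => ![(0 : ℝ), (0 : ℝ), p 0 + p 1]} : Set (VF 3)) := by
        have h := Submodule.add_mem _ (hbrL _ hE1 _ hE2) hE0
        rw [hb12, show -FF 0 + (2:ℝ) • FF 6 + FF 0 = (2:ℝ) • FF 6 from by abel] at h
        have h2 := Submodule.smul_mem _ (2⁻¹:ℝ) h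
        rwa [smul_smul, show (2⁻¹:ℝ) * 2 = 1 from by norm_num, one_smul] at h2
      have hb16 : vbr (FF 1) (FF 6) = FF 7 := by
        rw [brFF]
        simp +decide [Bc, BcZ, BcU, sgl, Fin.sum_univ_eight]
      have hE7 : FF 7 ∈ liealgGen ({FF 0, FF 1, FF 2,
          fun p => ![(0 : ℝ), (0 : ℝ), p 0 + p 1]} : Set (VF 3)) := by
        have h := hbrL _ hE1 _ hE6
        rwa [hb16] at h
      rintro _ ⟨k, rfl⟩
      have hall : ∀ k : Fin 8, k = 0 ∨ k = 1 ∨ k = 2 ∨ k = 3 ∨ k = 4 ∨ k = 5 ∨ k = 6 ∨ k = 7 := by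
        decide
      rcases hall k with rfl|rfl|rfl|rfl|rfl|rfl|rfl|rfl <;> assumption
  · -- bracket closure of g
    intro v hv w hw
    rw [hg] at hv hw ⊢
    exact br_closed v hv w hw
  · exact FF_li
  · rw [hg, finrank_span_eq_card FF_li]
    simp
  · -- nilpotency
    refine ⟨5, ?_⟩
    have hmono : ∀ (M M' : Submodule ℝ (VF 3)), M ≤ M' →
        {u | ∃ v ∈ g, ∃ w ∈ M, u = vbr v w} ⊆ {u | ∃ v ∈ g, ∃ w ∈ M', u = vbr v w} := by
      rintro M M' h u ⟨v, hv, w, hw, rfl⟩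
      exact ⟨v, hv, w, h hw, rfl⟩
    have hstep : ∀ (n : ℕ) (s t : Finset (Fin 8)), lcs g n ≤ Msub s →
        (∀ i j k : Fin 8, j ∈ s → k ∉ t → BcZ i j k = 0) → lcs g (n+1) ≤ Msub t := by
      intro n s t hle hB
      have hrfl : lcs g (n+1)
          = Submodule.span ℝ {u | ∃ v ∈ g, ∃ w ∈ lcs g n, u = vbr v w} := rfl
      rw [hrfl]
      refine le_trans (Submodule.span_mono (hmono _ _ hle)) ?_
      rw [Submodule.span_le]
      rintro u ⟨v, hv, w, hw, rfl⟩
      rw [hg] at hv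
      obtain ⟨c, rfl⟩ := (Submodule.mem_span_range_iff_exists_fun ℝ).1 hv
      obtain ⟨d, hd, rfl⟩ := Msub_rep hw
      rw [vbr_combFF]
      refine sum_mem_Msub _ _ fun k hk => ?_
      refine Finset.sum_eq_zero fun i _ => Finset.sum_eq_zero fun j _ => ?_
      by_cases hj : j ∈ s
      · have hz : BcZ i j k = 0 := hB i j k hj hk
        simp [Bc, hz]
      · rw [hd j hj]
        ring
    have l0 : lcs g 0 ≤ Msub Finset.univ := by
      rw [show lcs g 0 = g from rfl, hg, hgM]
    have l1 : lcs g 1 ≤ Msub {0,3,4,5,6,7} := hstep 0 _ _ l0 (by decide)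
    have l2 : lcs g 2 ≤ Msub {3,4,5,7} := hstep 1 _ _ l1 (by decide)
    have l3 : lcs g 3 ≤ Msub {3,5} := hstep 2 _ _ l2 (by decide)
    have l4 : lcs g 4 ≤ Msub {3} := hstep 3 _ _ l3 (by decide)
    have l5 : lcs g 5 ≤ Msub ∅ := hstep 4 _ _ l4 (by decide)
    have hbot : Msub ∅ = ⊥ := by simp [Msub]
    exact le_bot_iff.1 (hbot ▸ l5)
  · -- K = ker
    ext v
    simp only [SetLike.mem_coe, Set.mem_setOf_eq]
    constructor
    · intro hv
      rw [hKM] at hv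
      obtain ⟨α, hα, rfl⟩ := Msub_rep hv
      constructor
      · rw [hg]
        exact Submodule.sum_mem _ fun k _ =>
          Submodule.smul_mem _ _ (Submodule.subset_span ⟨k, rfl⟩)
      · have p3 : Pzl (FF 3) = 0 := by funext p i; fin_cases i <;> rfl
        have p4 : Pzl (FF 4) = 0 := by funext p i; fin_cases i <;> rfl
        have p5 : Pzl (FF 5) = 0 := by funext p i; fin_cases i <;> rfl
        have p6 : Pzl (FF 6) = 0 := by funext p i; fin_cases i <;> rfl
        have p7 : Pzl (FF 7) = 0 := by funext p i; fin_cases i <;> rfl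
        simp only [map_sum, Fin.sum_univ_eight, map_add, map_smul, hα 0 (by decide),
          hα 1 (by decide), hα 2 (by decide), p3, p4, p5, p6, p7, zero_smul, smul_zero,
          add_zero, zero_add]
    · rintro ⟨hvg, hP⟩
      rw [hg] at hvg
      obtain ⟨c, rfl⟩ := (Submodule.mem_span_range_iff_exists_fun ℝ).1 hvg
      have hPv : ∀ p (i : Fin 3), Pzl (∑ k, c k • FF k) p i = 0 := by
        intro p i
        rw [hP]
        rfl
      have hPa : ∀ (w : VF 3) p (i : Fin 3), i ≠ 2 → Pzl w p i = w p i := by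
        intro w p i hi
        show (if i = 2 then 0 else w p i) = w p i
        rw [if_neg hi]
      have e1 := hPv ![0,0,0] 0
      have e2 := hPv ![0,1,0] 0
      have e3 := hPv ![0,0,0] 1
      rw [hPa _ _ _ (by decide)] at e1 e2 e3
      norm_num [Finset.sum_apply, Fin.sum_univ_eight] at e1 e2 e3
      rw [hKM]
      refine sum_mem_Msub _ _ fun k hk => ?_
      have hk3 := (by decide :
        ∀ k : Fin 8, k ∉ ({3,4,5,6,7} : Finset (Fin 8)) → k = 0 ∨ k = 1 ∨ k = 2) k hk
      rcases hk3 with rfl | rfl | rfl <;> linarith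
  · -- no complementary subalgebra
    rintro ⟨S, hSle, hSbr, hbot, hsup⟩
    have decomp : ∀ m : Fin 8, ∃ k ∈ K, FF m + k ∈ S := by
      intro m
      have hm : FF m ∈ S ⊔ K := by
        rw [hsup, hg]
        exact Submodule.subset_span ⟨m, rfl⟩
      obtain ⟨y, hy, z, hz, hyz⟩ := Submodule.mem_sup.1 hm
      refine ⟨-z, K.neg_mem hz, ?_⟩
      rw [show FF m + -z = y from by rw [← hyz]; abel]
      exact hy
    obtain ⟨k1, hk1, ha⟩ := decomp 0
    obtain ⟨k2, hk2, hb⟩ := decomp 1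
    obtain ⟨k3, hk3, hc⟩ := decomp 2
    have hk1' := hk1
    have hk2' := hk2
    have hk3' := hk3
    rw [hKM] at hk1' hk2' hk3'
    obtain ⟨α, hα, hαe⟩ := Msub_rep hk1'
    obtain ⟨β, hβ, hβe⟩ := Msub_rep hk2'
    obtain ⟨γ, hγ, hγe⟩ := Msub_rep hk3'
    refine noRel k1 k2 k3 hk1' hk2' hk3' ⟨?_, ?_⟩
    · have m1 : vbr (FF 0 + k1) (FF 2 + k3) ∈ S := hSbr _ ha _ hc
      have m2 : vbr (FF 0 + k1) (FF 2 + k3) ∈ K := by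
        rw [hKM, hαe, hγe, single_add_rep 0, single_add_rep 2, vbr_combFF]
        refine sum_mem_Msub _ _ fun k hk => ?_
        have hk3c := (by decide :
          ∀ k : Fin 8, k ∉ ({3,4,5,6,7} : Finset (Fin 8)) → k = 0 ∨ k = 1 ∨ k = 2) k hk
        rcases hk3c with rfl | rfl | rfl
        · rw [br_c0]
          simp [Pi.single_apply, hα 1 (by decide), hα 2 (by decide)]
        · rw [br_c1]
        · rw [br_c2]
      have hm : vbr (FF 0 + k1) (FF 2 + k3) ∈ S ⊓ K := ⟨m1, m2⟩
      rw [hbot] at hm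
      exact (Submodule.mem_bot ℝ).1 hm
    · have m1 : vbr (FF 1 + k2) (FF 2 + k3) + (FF 0 + k1) ∈ S :=
        S.add_mem (hSbr _ hb _ hc) ha
      have m2 : vbr (FF 1 + k2) (FF 2 + k3) + (FF 0 + k1) ∈ K := by
        rw [hKM, hαe, hβe, hγe, single_add_rep 1, single_add_rep 2, single_add_rep 0,
          vbr_combFF, ← Finset.sum_add_distrib]
        simp only [← add_smul]
        refine sum_mem_Msub _ _ fun k hk => ?_
        have hk3c := (by decide :
          ∀ k : Fin 8, k ∉ ({3,4,5,6,7} : Finset (Fin 8)) → k = 0 ∨ k = 1 ∨ k = 2) k hk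
        rcases hk3c with rfl | rfl | rfl
        · rw [br_c0]
          simp [Pi.single_apply, hα 0 (by decide), hβ 1 (by decide), hβ 2 (by decide),
            hγ 1 (by decide), hγ 2 (by decide)]
        · rw [br_c1]
          simp [Pi.single_apply, hα 1 (by decide)]
        · rw [br_c2]
          simp [Pi.single_apply, hα 2 (by decide)]
      have hm : vbr (FF 1 + k2) (FF 2 + k3) + (FF 0 + k1) ∈ S ⊓ K := ⟨m1, m2⟩
      rw [hbot] at hm
      exact eq_neg_of_add_eq_zero_left ((Submodule.mem_bot ℝ).1 hm)
  · -- the contradictory relations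
    intro k₁ hk1 k₂ hk2 k₃ hk3
    rw [hKM] at hk1 hk2 hk3
    exact noRel _ _ _ hk1 hk2 hk3
end
end
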